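/- Rule 14 conserves the density of the block 10: for any shift-invariant probability measure ν on {0,1}^ℤ, the pushforward measure satisfies (Φ_*ν){s : s(0)=1, s(1)=0} = ν{s : s(0)=1, s(1)=0}. -/

import Mathlib

open MeasureTheory Filter
open scoped ENNReal

/-- Local rule of elementary CA rule 14: output is 1 exactly on inputs
(0,0,1), (0,1,0), (0,1,1). -/
def rule14 (x0 x1 x2 : Bool) : Bool := !x0 && (x1 || x2)

/-- Global map of rule 14 on configurations `ℤ → Bool`. -/
def phi (s : ℤ → Bool) : ℤ → Bool := fun i => rule14 (s (i - 1)) (s i) (s (i + 1))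

/-!
The preimage of the cylinder `[10]` at `0, 1` under rule 14 is the cylinder `[01]` at `-1, 0`,
so by shift invariance `(Φ_*ν)[10] = ν[01]`. Shift invariance also gives `ν[1·] = ν[·1]`; removing
the common part `ν[11]` from both sides (all measures are finite) leaves `ν[10] = ν[01]`.
-/

section Cylinders

variable {α : Type*} [MeasurableSpace α] [MeasurableSingletonClass α]

theorem measurableSet_coord_eq (i : ℤ) (x : α) : MeasurableSet {s : ℤ → α | s i = x} :=
  (measurableSet_singleton x).preimage (measurable_pi_apply i)

theorem measurableSet_coord_eq_and_coord_eq (i j : ℤ) (x y : α) :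
    MeasurableSet {s : ℤ → α | s i = x ∧ s j = y} :=
  (measurableSet_coord_eq i x).inter (measurableSet_coord_eq j y)

omit [MeasurableSingletonClass α] in
theorem measurable_shift : Measurable fun (s : ℤ → α) (i : ℤ) => s (i + 1) :=
  measurable_pi_lambda _ fun i => measurable_pi_apply (i + 1)

theorem measurable_localRule [Countable α] (f : α → α → α → α) :
    Measurable fun (s : ℤ → α) (i : ℤ) => f (s (i - 1)) (s i) (s (i + 1)) :=
  measurable_pi_lambda _ fun i =>
    (measurable_of_countable fun p : α × α × α => f p.1 p.2.1 p.2.2).comp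
      (f := fun s : ℤ → α => (s (i - 1), s i, s (i + 1))) <|
      (measurable_pi_apply _).prodMk ((measurable_pi_apply _).prodMk (measurable_pi_apply _))

variable {ν : Measure (ℤ → α)}

theorem measure_coord_eq_shift
    (hν : MeasurePreserving (fun (s : ℤ → α) (i : ℤ) => s (i + 1)) ν ν) (a : ℤ) (x : α) :
    ν {s | s (a + 1) = x} = ν {s | s a = x} :=
  hν.measure_preimage (measurableSet_coord_eq a x).nullMeasurableSet

theorem measure_coord_eq_and_coord_eq_shift
    (hν : MeasurePreserving (fun (s : ℤ → α) (i : ℤ) => s (i + 1)) ν ν) (a b : ℤ) (x y : α) :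
    ν {s | s (a + 1) = x ∧ s (b + 1) = y} = ν {s | s a = x ∧ s b = y} :=
  hν.measure_preimage (measurableSet_coord_eq_and_coord_eq a b x y).nullMeasurableSet

end Cylinders

theorem measurable_phi : Measurable phi :=
  measurable_localRule rule14

theorem measure_eq_add_split_coord (ν : Measure (ℤ → Bool)) (A : Set (ℤ → Bool)) (i : ℤ) :
    ν A = ν {s | s ∈ A ∧ s i = true} + ν {s | s ∈ A ∧ s i = false} := by
  rw [← measure_inter_add_sdiff A (measurableSet_coord_eq i true)]
  congr 2
  ext s
  simp

theorem measure_block01_eq_measure_block10 {ν : Measure (ℤ → Bool)} [IsFiniteMeasure ν]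
    (hν : MeasurePreserving (fun (s : ℤ → Bool) (i : ℤ) => s (i + 1)) ν ν) :
    ν {s | s 0 = false ∧ s 1 = true} = ν {s | s 0 = true ∧ s 1 = false} := by
  have h0 := measure_eq_add_split_coord ν {s | s 0 = true} 1
  have h1 := measure_eq_add_split_coord ν {s | s 1 = true} 0
  have hcoord : ν {s | s 1 = true} = ν {s | s 0 = true} := by
    simpa using measure_coord_eq_shift hν 0 true
  simp only [Set.mem_ofPred_eq, and_comm] at h0 h1 ⊢
  rw [hcoord, h0] at h1
  exact ((ENNReal.add_right_inj (measure_ne_top ν _)).mp h1).symm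

theorem phi_preimage_block10 :
    phi ⁻¹' {s | s 0 = true ∧ s 1 = false} = {s | s (-1) = false ∧ s 0 = true} := by
  ext s
  simp only [Set.mem_preimage, Set.mem_ofPred_eq, phi, rule14]
  norm_num
  cases s (-1) <;> cases s 0 <;> cases s 1 <;> cases s 2 <;> simp

/-- Rule 14 conserves the density of the block `10`. -/
theorem rule14_conserves_10
    (ν : Measure (ℤ → Bool)) [IsProbabilityMeasure ν]
    (hshift : ν.map (fun s : ℤ → Bool => fun i => s (i + 1)) = ν) :
    (ν.map phi) {s | s 0 = true ∧ s 1 = false}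
      = ν {s | s 0 = true ∧ s 1 = false} := by
  have hν : MeasurePreserving (fun (s : ℤ → Bool) (i : ℤ) => s (i + 1)) ν ν :=
    ⟨measurable_shift, hshift⟩
  rw [Measure.map_apply measurable_phi
    (measurableSet_coord_eq_and_coord_eq 0 1 true false), phi_preimage_block10]
  calc ν {s | s (-1) = false ∧ s 0 = true} = ν {s | s 0 = false ∧ s 1 = true} := by
        simpa using (measure_coord_eq_and_coord_eq_shift hν (-1) 0 false true).symm
    _ = ν {s | s 0 = true ∧ s 1 = false} := measure_block01_eq_measure_block10 hν
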